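/- Let 𝔄 be an abelian category. The canonical functor from the localization of admissible Π-diagrams, lim↔ 𝔄 := S_a⁻¹ 𝔄^Π_a, to the localization of all Π-diagrams, lim↔^{ab} 𝔄 := S⁻¹ 𝔄^Π, is fully faithful. -/

import Mathlib

open CategoryTheory CategoryTheory.Limits

universe v u

/-- `Π = {(a,b) ∈ ℤ² : a ≤ b}` with the reverse componentwise order. -/
structure PiSet : Type where
  a : ℤ
  b : ℤ
  le_ab : a ≤ b

instance : PartialOrder PiSet where
  le x y := y.a ≤ x.a ∧ y.b ≤ x.b
  le_refl x := ⟨le_refl _, le_refl _⟩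
  le_trans x y z h h' := ⟨h'.1.trans h.1, h'.2.trans h.2⟩
  le_antisymm x y h h' := by
    cases x; cases y
    simp only [PiSet.mk.injEq]
    exact ⟨le_antisymm h'.1 h.1, le_antisymm h'.2 h.2⟩

variable {𝔄 : Type u} [Category.{v} 𝔄] [Abelian 𝔄]

/-- An object `E` of `𝔄^Π` is *admissible* if for all `a ≤ b ≤ c` the sequence
`0 → E^{b,c} → E^{a,c} → E^{a,b} → 0` (given by the transition maps) is short exact. -/
def Admissible (E : PiSet ⥤ 𝔄) : Prop :=
  ∀ (a b c : ℤ) (hab : a ≤ b) (hbc : b ≤ c),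
    ∃ w : E.map (homOfLE (show (⟨b, c, hbc⟩ : PiSet) ≤ ⟨a, c, hab.trans hbc⟩ from
            ⟨hab, le_refl c⟩)) ≫
          E.map (homOfLE (show (⟨a, c, hab.trans hbc⟩ : PiSet) ≤ ⟨a, b, hab⟩ from
            ⟨le_refl a, hbc⟩)) = 0,
      (ShortComplex.mk _ _ w).ShortExact

/-- `M`: order-preserving maps `ℤ → ℤ` tending to `±∞` at `±∞`. -/
def inM (φ : ℤ → ℤ) : Prop :=
  Monotone φ ∧ Filter.Tendsto φ Filter.atTop Filter.atTop ∧
    Filter.Tendsto φ Filter.atBot Filter.atBot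

/-- The diagram `φ̃(E)` with `φ̃(E)^{a,b} = E^{φ(a),φ(b)}`. -/
def tilde (φ : ℤ → ℤ) (hφ : Monotone φ) (E : PiSet ⥤ 𝔄) : PiSet ⥤ 𝔄 where
  obj p := E.obj ⟨φ p.a, φ p.b, hφ p.le_ab⟩
  map {p q} h := E.map (homOfLE ⟨hφ (leOfHom h).1, hφ (leOfHom h).2⟩)
  map_id p := by
    rw [← E.map_id]
    exact congrArg E.map (Subsingleton.elim _ _)
  map_comp f g := by
    rw [← E.map_comp]
    exact congrArg E.map (Subsingleton.elim _ _)

/-- The canonical morphism `φ̃(E) → ψ̃(E)` for `φ ≥ ψ` pointwise, given by transition maps. -/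
def canMap (φ ψ : ℤ → ℤ) (hφ : Monotone φ) (hψ : Monotone ψ) (h : ∀ i, ψ i ≤ φ i)
    (E : PiSet ⥤ 𝔄) : tilde φ hφ E ⟶ tilde ψ hψ E where
  app p := E.map (homOfLE ⟨h _, h _⟩)
  naturality p q f := by
    dsimp [tilde]
    rw [← E.map_comp, ← E.map_comp]
    exact congrArg E.map (Subsingleton.elim _ _)

/-- The class `S` of canonical morphisms `φ̃(E) → ψ̃(E)` for `φ ≥ ψ` in `M`. -/
def Scl : MorphismProperty (PiSet ⥤ 𝔄) := fun X Y f =>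
  ∃ (E : PiSet ⥤ 𝔄) (φ ψ : ℤ → ℤ) (hφ : inM φ) (hψ : inM ψ) (h : ∀ i, ψ i ≤ φ i)
    (hX : X = tilde φ hφ.1 E) (hY : Y = tilde ψ hψ.1 E),
    f = eqToHom hX ≫ canMap φ ψ hφ.1 hψ.1 h E ≫ eqToHom hY.symm

/-- `N(𝔄)`: the objects of `𝔄^Π` which become zero in the localization `S⁻¹𝔄^Π`. -/
def Nsub (E : PiSet ⥤ 𝔄) : Prop :=
  CategoryTheory.Limits.IsZero ((Scl (𝔄 := 𝔄)).Q.obj E)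

/-- The class `S_a`: the elements of `S` which are morphisms of the full
subcategory `𝔄^Π_a` of admissible diagrams. -/
def Sa : MorphismProperty (CategoryTheory.ObjectProperty.FullSubcategory (Admissible (𝔄 := 𝔄))) :=
  fun _ _ f => Scl ((ObjectProperty.ι (Admissible (𝔄 := 𝔄))).map f)

/-!
Every morphism `s : X ⟶ Y` in the multiplicative closure of `S` is dominated by a canonical
map `ρ̃(Y) → Y` with `ρ ≥ id` in `M`: there is `w` with `w ≫ s = fromTilde ρ Y`. For a
generator `φ̃(E) → ψ̃(E)` take `ρ` with `φ ≤ ψ ∘ ρ`, and domination is stable under composition.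
This yields a calculus of right fractions for `S`, and since `ρ̃` preserves admissibility, the
denominator of any fraction between admissible diagrams can be replaced by one in `S_a`. A full
subcategory with this refinement property localizes fully faithfully.
-/

namespace CategoryTheory

variable {C D₁ D₂ : Type*} [Category* C] [Category* D₁] [Category* D₂]

lemma Functor.IsLocalization.multiplicativeClosure (L : C ⥤ D₁) (W : MorphismProperty C)
    [L.IsLocalization W] : L.IsLocalization W.multiplicativeClosure :=
  of_equivalence_source L W L _ (Equivalence.refl)
    (fun _ _ f hf => MorphismProperty.le_isoClosure _ _ (.of f hf))
    ((W.multiplicativeClosure_le_iff ((MorphismProperty.isomorphisms D₁).inverseImage L)).2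
      (Localization.inverts L W)) L.leftUnitor

lemma Functor.faithful_of_comp_of_hasRightCalculusOfFractions (L : C ⥤ D₁)
    (W : MorphismProperty C) [L.IsLocalization W] [W.HasRightCalculusOfFractions] (F : D₁ ⥤ D₂)
    (h : ∀ ⦃X₁ X₂ : C⦄ (f g : X₁ ⟶ X₂), F.map (L.map f) = F.map (L.map g) → L.map f = L.map g) :
    F.Faithful := by
  have : F.op.Faithful := faithful_of_comp_of_hasLeftCalculusOfFractions L.op W.op F.op
    fun _ _ f g hfg => Quiver.Hom.unop_inj (h f.unop g.unop (Quiver.Hom.op_inj hfg))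
  exact ⟨fun hfg => Quiver.Hom.op_inj (F.op.map_injective (Quiver.Hom.unop_inj hfg))⟩

namespace MorphismProperty

lemma multiplicativeClosure_ext {W : MorphismProperty C}
    (h : ∀ ⦃X Y Y' : C⦄ (f₁ f₂ : X ⟶ Y) (s : Y ⟶ Y'), W s → f₁ ≫ s = f₂ ≫ s →
      ∃ (X' : C) (t : X' ⟶ X) (_ : W.multiplicativeClosure t), t ≫ f₁ = t ≫ f₂)
    ⦃X Y Y' : C⦄ (f₁ f₂ : X ⟶ Y) (s : Y ⟶ Y') (hs : W.multiplicativeClosure s)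
    (eq : f₁ ≫ s = f₂ ≫ s) :
    ∃ (X' : C) (t : X' ⟶ X) (_ : W.multiplicativeClosure t), t ≫ f₁ = t ≫ f₂ := by
  induction hs generalizing X with
  | of s hs => exact h f₁ f₂ s hs eq
  | id => exact ⟨X, 𝟙 X, .id X, by simpa using eq⟩
  | comp_of s₁ s₂ _ hs₂ ih =>
    obtain ⟨X', t, ht, fac⟩ := h (f₁ ≫ s₁) (f₂ ≫ s₁) s₂ hs₂ (by simpa using eq)
    obtain ⟨X'', t', ht', fac'⟩ := ih (t ≫ f₁) (t ≫ f₂) (by simpa using fac)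
    exact ⟨X'', t' ≫ t, comp_mem _ _ _ ht' ht, by simpa using fac'⟩

variable {P : ObjectProperty C} (W : MorphismProperty C) (W' : MorphismProperty P.FullSubcategory)

def IsRefinedBy : Prop :=
  ∀ ⦃X : C⦄ ⦃Y : P.FullSubcategory⦄ (s : X ⟶ Y.obj), W s →
    ∃ (Y' : P.FullSubcategory) (t : Y'.obj ⟶ X) (s' : Y' ⟶ Y), W' s' ∧ t ≫ s = s'.hom

variable {W W'}

lemma IsRefinedBy.hasRightCalculusOfFractions [W.HasRightCalculusOfFractions]
    [W'.IsMultiplicative] (hW : W' ≤ W.inverseImage P.ι) (h : W.IsRefinedBy W') :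
    W'.HasRightCalculusOfFractions where
  exists_rightFraction X Y φ := by
    obtain ⟨ψ, fac⟩ := HasRightCalculusOfFractions.exists_rightFraction
      (LeftFraction.mk (W := W) φ.f.hom φ.s.hom (hW _ φ.hs))
    obtain ⟨Y'', t, s', hs', ht⟩ := h ψ.s ψ.hs
    refine ⟨RightFraction.mk s' hs' (P.homMk (t ≫ ψ.f)), ObjectProperty.hom_ext _ ?_⟩
    simp only [ObjectProperty.FullSubcategory.comp_hom, ObjectProperty.homMk_hom, Category.assoc]
    rw [← ht, Category.assoc]
    exact congrArg (t ≫ ·) fac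
  ext X Y Y' f₁ f₂ s hs eq := by
    obtain ⟨X', t, ht, fac⟩ := HasRightCalculusOfFractions.ext (W := W) f₁.hom f₂.hom s.hom
      (hW _ hs) (congrArg InducedCategory.Hom.hom eq)
    obtain ⟨X'', u, t', ht', hu⟩ := h t ht
    refine ⟨X'', t', ht', ObjectProperty.hom_ext _ ?_⟩
    simp only [ObjectProperty.FullSubcategory.comp_hom, ← hu, Category.assoc, fac]

variable (L₁ : P.FullSubcategory ⥤ D₁) (L₂ : C ⥤ D₂) [L₁.IsLocalization W'] [L₂.IsLocalization W]
  [W.HasRightCalculusOfFractions] {G : D₁ ⥤ D₂}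

lemma IsRefinedBy.full (e : P.ι ⋙ L₂ ≅ L₁ ⋙ G) (h : W.IsRefinedBy W') : G.Full := by
  have := Localization.essSurj L₁ W'
  have hG {A B : P.FullSubcategory} (f : A ⟶ B) :
      G.map (L₁.map f) = e.inv.app A ≫ L₂.map f.hom ≫ e.hom.app B :=
    (NatIso.naturality_1 e f).symm
  refine G.full_of_comp_essSurj L₁ fun X₁ X₂ φ => ?_
  obtain ⟨z, hz⟩ := Localization.exists_rightFraction L₂ W (e.hom.app X₁ ≫ φ ≫ e.inv.app X₂)
  obtain ⟨Y, t, s, hs, ht⟩ := h z.s z.hs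
  have := Localization.inverts L₁ W' s hs
  let z' : W'.RightFraction X₁ X₂ := RightFraction.mk s hs (P.homMk (t ≫ z.f))
  refine ⟨z'.map L₁ (Localization.inverts L₁ W'), ?_⟩
  have hφ : φ = e.inv.app X₁ ≫ z.map L₂ (Localization.inverts L₂ W) ≫ e.hom.app X₂ := by
    simp [← hz]
  rw [← cancel_epi (G.map (L₁.map s)), ← G.map_comp, z'.map_s_comp_map, hG, hG, hφ, ← ht]
  simp [z']

lemma IsRefinedBy.faithful [W'.IsMultiplicative] (e : P.ι ⋙ L₂ ≅ L₁ ⋙ G)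
    (hW : W' ≤ W.inverseImage P.ι) (h : W.IsRefinedBy W') : G.Faithful := by
  have := h.hasRightCalculusOfFractions hW
  refine Functor.faithful_of_comp_of_hasRightCalculusOfFractions L₁ W' G fun X₁ X₂ f g hfg => ?_
  have hL₂ : L₂.map f.hom = L₂.map g.hom := by
    simpa [cancel_mono] using
      (NatIso.naturality_1 e f).trans (hfg.trans (NatIso.naturality_1 e g).symm)
  obtain ⟨Y, s, hs, fac⟩ := (MorphismProperty.map_eq_iff_precomp L₂ W f.hom g.hom).1 hL₂
  obtain ⟨Y', t, s', hs', ht⟩ := h s hs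
  refine (MorphismProperty.map_eq_iff_precomp L₁ W' f g).2
    ⟨Y', s', hs', ObjectProperty.hom_ext _ ?_⟩
  simp [← ht, fac]

end MorphismProperty
end CategoryTheory

section

variable {𝔄 : Type*} [Category 𝔄]

lemma inM_id : inM (id : ℤ → ℤ) := ⟨monotone_id, Filter.tendsto_id, Filter.tendsto_id⟩

lemma inM.comp {ρ σ : ℤ → ℤ} (hσ : inM σ) (hρ : inM ρ) : inM (σ ∘ ρ) :=
  ⟨hσ.1.comp hρ.1, hσ.2.1.comp hρ.2.1, hσ.2.2.comp hρ.2.2⟩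

lemma exists_inM_le_comp {φ ψ : ℤ → ℤ} (hφ : inM φ) (hψ : inM ψ) :
    ∃ ρ : ℤ → ℤ, inM ρ ∧ (∀ i, i ≤ ρ i) ∧ ∀ i, φ i ≤ ψ (ρ i) := by
  have hex : ∀ i : ℤ, ∃ l : ℤ, φ i ≤ ψ l ∧ ∀ z : ℤ, φ i ≤ ψ z → l ≤ z := by
    intro i
    obtain ⟨b, hb⟩ := Filter.eventually_atBot.1 (hψ.2.2.eventually_lt_atBot (φ i))
    refine Int.exists_least_of_bdd ⟨b + 1, fun z hz => ?_⟩
      (hψ.2.1.eventually_ge_atTop (φ i)).exists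
    by_contra! hzb
    exact (hz.trans_lt (hb z (by omega))).false
  choose l hl hl_least using hex
  refine ⟨fun i => max i (l i), ⟨fun i j hij => max_le_max hij ?_, ?_, ?_⟩,
    fun i => le_max_left _ _, fun i => (hl i).trans (hψ.1 (le_max_right _ _))⟩
  · exact hl_least i _ ((hφ.1 hij).trans (hl j))
  · exact Filter.tendsto_atTop_mono (fun i => le_max_left i (l i)) Filter.tendsto_id
  · refine Filter.tendsto_atBot.2 fun b => ?_
    filter_upwards [Filter.eventually_le_atBot b, hφ.2.2.eventually_le_atBot (ψ b)] with i hib hi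
    exact max_le hib (hl_least i b hi)

def tildeMap (ρ : ℤ → ℤ) (hρ : Monotone ρ) {X Y : PiSet ⥤ 𝔄} (f : X ⟶ Y) :
    tilde ρ hρ X ⟶ tilde ρ hρ Y where
  app p := f.app ⟨ρ p.a, ρ p.b, hρ p.le_ab⟩
  naturality _ _ _ := f.naturality _

lemma tildeMap_comp (ρ : ℤ → ℤ) (hρ : Monotone ρ) {X Y Z : PiSet ⥤ 𝔄} (f : X ⟶ Y) (g : Y ⟶ Z) :
    tildeMap ρ hρ (f ≫ g) = tildeMap ρ hρ f ≫ tildeMap ρ hρ g := rfl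

lemma canMap_comp {φ ψ χ : ℤ → ℤ} (hφ : Monotone φ) (hψ : Monotone ψ) (hχ : Monotone χ)
    (h₁ : ∀ i, ψ i ≤ φ i) (h₂ : ∀ i, χ i ≤ ψ i) (E : PiSet ⥤ 𝔄) :
    canMap φ ψ hφ hψ h₁ E ≫ canMap ψ χ hψ hχ h₂ E =
      canMap φ χ hφ hχ (fun i => (h₂ i).trans (h₁ i)) E := by
  ext p
  exact (E.map_comp _ _).symm

lemma canMap_naturality {φ ψ : ℤ → ℤ} (hφ : Monotone φ) (hψ : Monotone ψ) (h : ∀ i, ψ i ≤ φ i)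
    {X Y : PiSet ⥤ 𝔄} (f : X ⟶ Y) :
    tildeMap φ hφ f ≫ canMap φ ψ hφ hψ h Y = canMap φ ψ hφ hψ h X ≫ tildeMap ψ hψ f := by
  ext p
  exact (f.naturality _).symm

lemma scl_canMap {φ ψ : ℤ → ℤ} (hφ : inM φ) (hψ : inM ψ) (h : ∀ i, ψ i ≤ φ i)
    (E : PiSet ⥤ 𝔄) : Scl (canMap φ ψ hφ.1 hψ.1 h E) :=
  ⟨E, φ, ψ, hφ, hψ, h, rfl, rfl, by simp⟩

def fromTilde (ρ : ℤ → ℤ) (hρ : Monotone ρ) (hle : ∀ i, i ≤ ρ i) (X : PiSet ⥤ 𝔄) :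
    tilde ρ hρ X ⟶ X :=
  canMap ρ id hρ monotone_id hle X

lemma fromTilde_naturality {ρ : ℤ → ℤ} (hρ : Monotone ρ) (hle : ∀ i, i ≤ ρ i)
    {X Y : PiSet ⥤ 𝔄} (f : X ⟶ Y) :
    tildeMap ρ hρ f ≫ fromTilde ρ hρ hle Y = fromTilde ρ hρ hle X ≫ f :=
  canMap_naturality hρ monotone_id hle f

lemma fromTilde_comp {ρ σ : ℤ → ℤ} (hρ : Monotone ρ) (hσ : Monotone σ) (hleρ : ∀ i, i ≤ ρ i)
    (hleσ : ∀ i, i ≤ σ i) (X : PiSet ⥤ 𝔄) :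
    fromTilde ρ hρ hleρ (tilde σ hσ X) ≫ fromTilde σ hσ hleσ X =
      fromTilde (σ ∘ ρ) (hσ.comp hρ) (fun i => (hleρ i).trans (hleσ _)) X :=
  canMap_comp (hσ.comp hρ) hσ monotone_id (fun i => hσ (hleρ i)) hleσ X

lemma fromTilde_tilde {φ ψ ρ : ℤ → ℤ} (hφ : Monotone φ) (hψ : Monotone ψ) (hρ : Monotone ρ)
    (h : ∀ i, ψ i ≤ φ i) (hle : ∀ i, i ≤ ρ i) (hφψ : ∀ i, φ i ≤ ψ (ρ i)) (E : PiSet ⥤ 𝔄) :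
    fromTilde ρ hρ hle (tilde φ hφ E) =
      tildeMap ρ hρ (canMap φ ψ hφ hψ h E) ≫ canMap (ψ ∘ ρ) φ (hψ.comp hρ) hφ hφψ E :=
  (canMap_comp (hφ.comp hρ) (hψ.comp hρ) hφ (fun i => h (ρ i)) hφψ E).symm

lemma scl_fromTilde {ρ : ℤ → ℤ} (hρ : inM ρ) (hle : ∀ i, i ≤ ρ i) (X : PiSet ⥤ 𝔄) :
    Scl (fromTilde ρ hρ.1 hle X) :=
  scl_canMap hρ inM_id hle X

lemma Scl.exists_comp_eq_fromTilde {X Y : PiSet ⥤ 𝔄} {s : X ⟶ Y} (hs : Scl s) :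
    ∃ (ρ : ℤ → ℤ) (hρ : inM ρ) (hle : ∀ i, i ≤ ρ i) (w : tilde ρ hρ.1 Y ⟶ X),
      w ≫ s = fromTilde ρ hρ.1 hle Y := by
  obtain ⟨E, φ, ψ, hφ, hψ, h, rfl, rfl, rfl⟩ := hs
  obtain ⟨ρ, hρ, hle, hφψ⟩ := exists_inM_le_comp hφ hψ
  refine ⟨ρ, hρ, hle, canMap (ψ ∘ ρ) φ (hψ.1.comp hρ.1) hφ.1 hφψ E, ?_⟩
  simp only [eqToHom_refl, Category.id_comp, Category.comp_id]
  exact canMap_comp _ hφ.1 hψ.1 _ _ E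

lemma exists_comp_eq_fromTilde {X Y : PiSet ⥤ 𝔄} {s : X ⟶ Y}
    (hs : Scl.multiplicativeClosure s) :
    ∃ (ρ : ℤ → ℤ) (hρ : inM ρ) (hle : ∀ i, i ≤ ρ i) (w : tilde ρ hρ.1 Y ⟶ X),
      w ≫ s = fromTilde ρ hρ.1 hle Y := by
  induction hs with
  | of s hs => exact hs.exists_comp_eq_fromTilde
  | id X => exact ⟨id, inM_id, fun _ => le_rfl, fromTilde id monotone_id (fun _ => le_rfl) X,
      Category.comp_id _⟩
  | @comp_of X Y Z f g _ hg ih =>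
    obtain ⟨ρ₁, hρ₁, hle₁, w₁, hw₁⟩ := ih
    obtain ⟨ρ₂, hρ₂, hle₂, w₂, hw₂⟩ := hg.exists_comp_eq_fromTilde
    refine ⟨ρ₂ ∘ ρ₁, hρ₂.comp hρ₁, fun i => (hle₁ i).trans (hle₂ _),
      tildeMap ρ₁ hρ₁.1 w₂ ≫ w₁, ?_⟩
    refine .trans ?_ (fromTilde_comp hρ₁.1 hρ₂.1 hle₁ hle₂ Z)
    calc (tildeMap ρ₁ hρ₁.1 w₂ ≫ w₁) ≫ f ≫ g
        = tildeMap ρ₁ hρ₁.1 w₂ ≫ fromTilde ρ₁ hρ₁.1 hle₁ Y ≫ g := by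
          simp only [Category.assoc, reassoc_of% hw₁]
      _ = fromTilde ρ₁ hρ₁.1 hle₁ (tilde ρ₂ hρ₂.1 Z) ≫ w₂ ≫ g := by
          simp only [reassoc_of% fromTilde_naturality]
      _ = fromTilde ρ₁ hρ₁.1 hle₁ (tilde ρ₂ hρ₂.1 Z) ≫ fromTilde ρ₂ hρ₂.1 hle₂ Z := by
          rw [hw₂]

lemma Scl.exists_fromTilde_comp_eq {X Y Y' : PiSet ⥤ 𝔄} {s : Y ⟶ Y'} (hs : Scl s)
    (f₁ f₂ : X ⟶ Y) (eq : f₁ ≫ s = f₂ ≫ s) :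
    ∃ (ρ : ℤ → ℤ) (hρ : inM ρ) (hle : ∀ i, i ≤ ρ i),
      fromTilde ρ hρ.1 hle X ≫ f₁ = fromTilde ρ hρ.1 hle X ≫ f₂ := by
  obtain ⟨E, φ, ψ, hφ, hψ, h, rfl, rfl, rfl⟩ := hs
  simp only [eqToHom_refl, Category.id_comp, Category.comp_id] at eq
  obtain ⟨ρ, hρ, hle, hφψ⟩ := exists_inM_le_comp hφ hψ
  have key (f : X ⟶ tilde φ hφ.1 E) : fromTilde ρ hρ.1 hle X ≫ f =
      tildeMap ρ hρ.1 (f ≫ canMap φ ψ hφ.1 hψ.1 h E) ≫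
        canMap (ψ ∘ ρ) φ (hψ.1.comp hρ.1) hφ.1 hφψ E := by
    rw [← fromTilde_naturality, fromTilde_tilde hφ.1 hψ.1 hρ.1 h hle hφψ, tildeMap_comp]
    exact (Category.assoc _ _ _).symm
  exact ⟨ρ, hρ, hle, by rw [key, key, eq]⟩

instance : (Scl (𝔄 := 𝔄)).multiplicativeClosure.HasRightCalculusOfFractions where
  exists_rightFraction X Y φ := by
    obtain ⟨ρ, hρ, hle, w, hw⟩ := exists_comp_eq_fromTilde φ.hs
    refine ⟨.mk (fromTilde ρ hρ.1 hle X) (.of _ (scl_fromTilde hρ hle X))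
      (tildeMap ρ hρ.1 φ.f ≫ w), ?_⟩
    rw [Category.assoc, hw, fromTilde_naturality]
  ext _ _ _ f₁ f₂ s hs eq := by
    refine MorphismProperty.multiplicativeClosure_ext
      (fun X _ _ g₁ g₂ _ ht eq' => ?_) f₁ f₂ s hs eq
    obtain ⟨ρ, hρ, hle, fac⟩ := ht.exists_fromTilde_comp_eq g₁ g₂ eq'
    exact ⟨_, _, .of _ (scl_fromTilde hρ hle X), fac⟩

end

lemma admissible_tilde (ρ : ℤ → ℤ) (hρ : Monotone ρ) {E : PiSet ⥤ 𝔄} (hE : Admissible E) :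
    Admissible (tilde ρ hρ E) :=
  fun a b c hab hbc => hE (ρ a) (ρ b) (ρ c) (hρ hab) (hρ hbc)

lemma sa_multiplicativeClosure_le :
    (Sa (𝔄 := 𝔄)).multiplicativeClosure ≤
      (Scl (𝔄 := 𝔄)).multiplicativeClosure.inverseImage (ObjectProperty.ι Admissible) :=
  (MorphismProperty.multiplicativeClosure_le_iff _ _).2 fun _ _ _ hf => .of _ hf

lemma scl_multiplicativeClosure_isRefinedBy :
    (Scl (𝔄 := 𝔄)).multiplicativeClosure.IsRefinedBy (Sa (𝔄 := 𝔄)).multiplicativeClosure := by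
  intro X Y s hs
  obtain ⟨ρ, hρ, hle, w, hw⟩ := exists_comp_eq_fromTilde hs
  exact ⟨⟨tilde ρ hρ.1 Y.obj, admissible_tilde ρ hρ.1 Y.property⟩, w,
    ObjectProperty.homMk (fromTilde ρ hρ.1 hle Y.obj), .of _ (scl_fromTilde hρ hle Y.obj), hw⟩

/-- The canonical functor `lim↔ 𝔄 = S_a⁻¹ 𝔄^Π_a → lim↔^{ab} 𝔄 = S⁻¹ 𝔄^Π`
(the one compatible with the localization functors and the inclusion
`𝔄^Π_a ⊆ 𝔄^Π`) is fully faithful. -/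
theorem lim_to_limab_fullyFaithful :
    ∃ Fc : (Sa (𝔄 := 𝔄)).Localization ⥤ (Scl (𝔄 := 𝔄)).Localization,
      (Sa (𝔄 := 𝔄)).Q ⋙ Fc
          = ObjectProperty.ι (Admissible (𝔄 := 𝔄)) ⋙ (Scl (𝔄 := 𝔄)).Q ∧
      Fc.Full ∧ Fc.Faithful := by
  have := Functor.IsLocalization.multiplicativeClosure (Sa (𝔄 := 𝔄)).Q Sa
  have := Functor.IsLocalization.multiplicativeClosure (Scl (𝔄 := 𝔄)).Q Scl
  have fac := Localization.Construction.fac (W := Sa (𝔄 := 𝔄))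
    (ObjectProperty.ι Admissible ⋙ (Scl (𝔄 := 𝔄)).Q) fun _ _ f hf => Scl.Q_inverts _ hf
  exact ⟨_, fac, scl_multiplicativeClosure_isRefinedBy.full _ _ (eqToIso fac.symm),
    scl_multiplicativeClosure_isRefinedBy.faithful _ _ (eqToIso fac.symm)
      sa_multiplicativeClosure_le⟩
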